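/- arXiv:0906.0377 — 3 statements merged into one kernel-verified Lean document; each statement's English description precedes it below -/
import Mathlib

section
/- (Garsia–Gessel) Let π_1,...,π_k be words forming ordered complementary subsets of [n], where π_i has length a_i (so a_1+...+a_k = n), and let S(π_1,...,π_k) be the set of permutations of [n] obtained by shuffling π_1,...,π_k. Then Σ_{σ ∈ S(π_1,...,π_k)} q^{maj(σ)} = [n; a_1,...,a_k]_q · q^{maj(π_1)+...+maj(π_k)}, as an identity of polynomials in q. -/
open Polynomial

/-- The word (1, 2, ..., n) as a list of integers. -/
def W (n : ℕ) : List ℤ := (List.range n).map (fun i => (i : ℤ) + 1)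

/-- Descent set of a word: 1-based indices i ∈ {1,...,m-1} with w(i) > w(i+1). -/
def descSet (w : List ℤ) : Finset ℕ :=
  (Finset.Icc 1 (w.length - 1)).filter (fun i => w.getD (i - 1) 0 > w.getD i 0)

/-- Major index of a word: the sum of its descents. -/
def maj (w : List ℤ) : ℕ := ∑ i ∈ descSet w, i

/-- `dstat w k` is the number of descents of `w` that are ≥ k. -/
def dstat (w : List ℤ) (k : ℕ) : ℕ := ((descSet w).filter (fun i => k ≤ i)).card

/-- Major increment: the change in major index when `r` is inserted into `w`
at (1-based) position `k`. -/
def mi (w : List ℤ) (k : ℕ) (r : ℤ) : ℤ := (maj (w.insertIdx (k - 1) r) : ℤ) - (maj w : ℤ)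

/-- The q-factorial [m]_q! = ∏_{i=1}^m (1 + q + ... + q^{i-1}), as a polynomial in q. -/
noncomputable def qFact (m : ℕ) : Polynomial ℚ :=
  ∏ i ∈ Finset.range m, ∑ j ∈ Finset.range (i + 1), (X : Polynomial ℚ) ^ j

/-- The q-binomial coefficient [n choose a]_q = [n]_q!/([a]_q!·[n−a]_q!). -/
noncomputable def qBinom (n a : ℕ) : Polynomial ℚ := qFact n / (qFact a * qFact (n - a))

/-- The set of all shuffles of two words `θ` and `π` (words containing `θ` and `π`
as complementary subwords). -/
def shuffles (θ π : List ℤ) : Finset (List ℤ) :=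
  (θ ++ π).permutations.toFinset.filter (fun σ => θ.Sublist σ ∧ π.Sublist σ)

/-- The set of all shuffles of a family of words (words containing each member of
`L` as a subword, the members of `L` being complementary subwords). -/
def shufflesMulti (L : List (List ℤ)) : Finset (List ℤ) :=
  L.flatten.permutations.toFinset.filter (fun σ => ∀ w ∈ L, w.Sublist σ)

/-!
Stanley's P-partitions. Call labels `f₁ ≥ f₂ ≥ ⋯ ≥ fₘ ≥ 0` compatible with a word `w` of distinct
letters if `fⱼ > fⱼ₊₁` at every descent `j` of `w`. Subtracting from `fⱼ` the number of descents
`≥ j` turns compatible labellings of total `d` into partitions of `d - maj w` with at most `m`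
parts, so compatible labellings have generating function `q ^ maj w / (q; q)_m`.

A labelling of the letters of `θ` and `π` is compatible with exactly one word on these letters:
list them by decreasing label, breaking ties by increasing letter. That word is a shuffle of `θ`
and `π` iff the labelling restricts to compatible labellings of `θ` and of `π`. Hence
`∑_σ q ^ maj σ / (q; q)_n = q ^ maj θ / (q; q)_a · q ^ maj π / (q; q)_b`, and since
`(q; q)_m = (1 - q) ^ m [m]_q!` this is the case of two words; induction on the number of words
does the rest.
-/

open Finset
open scoped PowerSeries

theorem List.filter_mem_eq_of_sublist {α : Type*} [DecidableEq α] {l₁ l₂ : List α}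
    (h : l₁.Sublist l₂) (hl₂ : l₂.Nodup) : l₂.filter (· ∈ l₁) = l₁ := by
  induction h with
  | slnil => rfl
  | @cons l₁ l₂ a h ih =>
    obtain ⟨ha, hl₂⟩ := List.nodup_cons.1 hl₂
    rw [List.filter_cons_of_neg (by simpa using fun h' => ha (h.subset h')), ih hl₂]
  | @cons_cons l₁ l₂ a h ih =>
    obtain ⟨ha, hl₂⟩ := List.nodup_cons.1 hl₂
    rw [List.filter_cons_of_pos (by simp)]
    congr 1
    refine (List.filter_congr fun x hx => ?_).trans (ih hl₂)
    simp [show x ≠ a by rintro rfl; exact ha hx]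

theorem List.sum_mapIdx_add {M : Type*} [AddCommMonoid M] (l : List M) (f : ℕ → M) :
    (l.mapIdx fun j x => x + f j).sum = l.sum + ∑ j ∈ Finset.range l.length, f j := by
  induction l generalizing f with
  | nil => simp
  | cons a l ih =>
    rw [List.mapIdx_cons, List.sum_cons, ih, List.length_cons, Finset.sum_range_succ',
      List.sum_cons]
    abel

theorem List.pairwise_ge_iff {α : Type*} [Preorder α] {l : List α} :
    l.Pairwise (· ≥ ·) ↔ ∀ j (hj : j + 1 < l.length), l[j + 1] ≤ l[j] := by
  rw [← List.isChain_iff_pairwise, List.isChain_iff_getElem]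

theorem Polynomial.dvd_of_dvd_mul_X_pow {K : Type*} [Field K] {p q : K[X]} {s : ℕ}
    (hp : p.eval 0 ≠ 0) (h : p ∣ q * X ^ s) : p ∣ q := by
  have hX : ¬X ∣ p := by rwa [X_dvd_iff, coeff_zero_eq_eval_zero]
  exact (((irreducible_X.coprime_iff_not_dvd).2 hX).symm.pow_right).dvd_of_dvd_mul_right h

noncomputable def qPochhammer (m : ℕ) : ℚ[X] := ∏ i ∈ range m, (1 - X ^ (i + 1))

theorem qPochhammer_eq (m : ℕ) : qPochhammer m = (1 - X) ^ m * qFact m := by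
  rw [qPochhammer, qFact, ← card_range m, ← prod_const, card_range, ← prod_mul_distrib]
  refine prod_congr rfl fun i _ => ?_
  linear_combination geom_sum_mul (X : ℚ[X]) (i + 1)

theorem eval_zero_qFact (m : ℕ) : (qFact m).eval 0 = 1 := by
  simp [qFact, eval_prod, eval_finsetSum, sum_range_succ']

theorem qFact_ne_zero (m : ℕ) : qFact m ≠ 0 := fun h => by
  simpa [h] using eval_zero_qFact m

/-! ### Partitions with at most `m` parts -/

def sumLists (m d : ℕ) : Finset (List ℕ) := (Nat.antidiagonalTuple m d).image List.ofFn

theorem mem_sumLists {m d : ℕ} {l : List ℕ} : l ∈ sumLists m d ↔ l.length = m ∧ l.sum = d := by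
  simp only [sumLists, mem_image, Nat.mem_antidiagonalTuple]
  constructor
  · rintro ⟨f, rfl, rfl⟩
    simp [List.sum_ofFn]
  · rintro ⟨rfl, rfl⟩
    exact ⟨fun i => l[i], by simp [← List.sum_ofFn], List.ofFn_getElem⟩

def antitoneLists (m d : ℕ) : Finset (List ℕ) := (sumLists m d).filter (·.Pairwise (· ≥ ·))

theorem mem_antitoneLists {m d : ℕ} {l : List ℕ} :
    l ∈ antitoneLists m d ↔ l.length = m ∧ l.Pairwise (· ≥ ·) ∧ l.sum = d := by
  simp only [antitoneLists, mem_filter, mem_sumLists]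
  tauto

theorem card_antitoneLists_zero (d : ℕ) : #(antitoneLists 0 d) = if d = 0 then 1 else 0 := by
  have : antitoneLists 0 d = if d = 0 then {[]} else ∅ := by
    ext l
    split_ifs with hd <;> simp only [mem_antitoneLists, List.length_eq_zero_iff] <;> aesop
  split_ifs at this ⊢ <;> simp [this]

theorem dropLast_append_zero {l : List ℕ} (hl : l.Pairwise (· ≥ ·)) (h0 : 0 ∈ l) :
    l.dropLast ++ [0] = l := by
  have hlast : l.getLast (List.ne_nil_of_mem h0) = 0 := Nat.le_zero.1 (hl.rel_getLast h0)
  conv_rhs => rw [← List.dropLast_concat_getLast (List.ne_nil_of_mem h0), hlast]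

theorem card_antitoneLists_filter_zero_mem (m d : ℕ) :
    #((antitoneLists (m + 1) d).filter (0 ∈ ·)) = #(antitoneLists m d) := by
  refine card_nbij' List.dropLast (· ++ [0]) (fun l hl => ?_) (fun g hg => ?_) (fun l hl => ?_)
    (fun g _ => List.dropLast_concat)
  · simp only [mem_coe, mem_filter, mem_antitoneLists] at hl
    obtain ⟨g, rfl⟩ : ∃ g, g ++ [0] = l := ⟨_, dropLast_append_zero hl.1.2.1 hl.2⟩
    simp_all [mem_antitoneLists, List.pairwise_append]
  · simp_all [mem_antitoneLists, List.pairwise_append]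
  · simp only [mem_coe, mem_filter, mem_antitoneLists] at hl
    exact dropLast_append_zero hl.1.2.1 hl.2

theorem map_sub_one_map_add_one {l : List ℕ} (h0 : 0 ∉ l) : (l.map (· - 1)).map (· + 1) = l := by
  rw [List.map_map]
  conv_rhs => rw [← List.map_id l]
  exact List.map_congr_left fun x hx => by have : x ≠ 0 := fun h => h0 (h ▸ hx); simp; omega

theorem card_antitoneLists_filter_zero_not_mem (m d : ℕ) :
    #((antitoneLists m d).filter (0 ∉ ·)) = if m ≤ d then #(antitoneLists m (d - m)) else 0 := by
  have hsum (g : List ℕ) : (g.map (· + 1)).sum = g.sum + g.length := by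
    simp [List.sum_map_add]
  split_ifs with hmd
  · refine card_nbij' (List.map (· - 1)) (List.map (· + 1)) (fun l hl => ?_) (fun g hg => ?_)
      (fun l hl => map_sub_one_map_add_one (mem_filter.1 hl).2)
      (fun g _ => by simp [Function.comp_def])
    · simp only [mem_coe, mem_filter] at hl
      obtain ⟨g, rfl⟩ : ∃ g : List ℕ, g.map (· + 1) = l := ⟨_, map_sub_one_map_add_one hl.2⟩
      simp only [mem_antitoneLists, List.length_map, List.pairwise_map, hsum] at hl
      simp only [List.map_map, Function.comp_def, Nat.add_sub_cancel, List.map_id', mem_coe,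
        mem_antitoneLists]
      exact ⟨hl.1.1, hl.1.2.1.imp (by omega), by omega⟩
    · simp only [mem_coe, mem_antitoneLists] at hg
      simp only [mem_coe, mem_filter, mem_antitoneLists, List.length_map,
        List.pairwise_map, hsum, List.mem_map]
      exact ⟨⟨hg.1, hg.2.1.imp (by omega), by omega⟩, by omega⟩
  · refine card_eq_zero.2 (filter_eq_empty_iff.2 fun l hl h0 => hmd ?_)
    obtain ⟨hlen, -, rfl⟩ := mem_antitoneLists.1 hl
    rw [← map_sub_one_map_add_one h0, hsum]
    simp [hlen]

noncomputable def antitoneGF (m : ℕ) : ℚ⟦X⟧ := PowerSeries.mk fun d => (#(antitoneLists m d) : ℚ)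

theorem antitoneGF_zero : antitoneGF 0 = 1 := by
  ext d
  simp [antitoneGF, card_antitoneLists_zero, PowerSeries.coeff_one]

theorem antitoneGF_succ_mul (m : ℕ) :
    antitoneGF (m + 1) * (1 - PowerSeries.X ^ (m + 1) : ℚ⟦X⟧) = antitoneGF m := by
  ext d
  simp only [mul_sub, mul_one, map_sub, PowerSeries.coeff_mul_X_pow', antitoneGF,
    PowerSeries.coeff_mk]
  rw [← card_filter_add_card_filter_not (s := antitoneLists (m + 1) d) (0 ∈ ·),
    card_antitoneLists_filter_zero_mem, card_antitoneLists_filter_zero_not_mem]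
  split_ifs <;> push_cast <;> ring

theorem antitoneGF_mul_qPochhammer (m : ℕ) : antitoneGF m * (qPochhammer m : ℚ⟦X⟧) = 1 := by
  induction m with
  | zero => simp [antitoneGF_zero, qPochhammer]
  | succ m ih =>
    calc antitoneGF (m + 1) * (qPochhammer (m + 1) : ℚ⟦X⟧)
        = antitoneGF (m + 1) * (1 - PowerSeries.X ^ (m + 1)) * (qPochhammer m : ℚ⟦X⟧) := by
          rw [qPochhammer, prod_range_succ, ← qPochhammer]
          push_cast
          ring
      _ = 1 := by rw [antitoneGF_succ_mul, ih]

/-! ### Compatible labellings -/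

theorem mem_descSet_iff {w : List ℤ} {j : ℕ} (hj : j + 1 < w.length) :
    j + 1 ∈ descSet w ↔ w[j + 1] < w[j] := by
  simp only [descSet, mem_filter, mem_Icc, Nat.add_sub_cancel,
    List.getD_eq_getElem _ _ hj, List.getD_eq_getElem _ _ (Nat.lt_of_succ_lt hj)]
  omega

theorem lt_length_of_mem_descSet {w : List ℤ} {i : ℕ} (h : i ∈ descSet w) : i < w.length := by
  simp only [descSet, mem_filter, mem_Icc] at h
  omega

theorem dstat_eq_zero {w : List ℤ} {k : ℕ} (hk : w.length ≤ k) : dstat w k = 0 :=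
  card_eq_zero.2 <| filter_eq_empty_iff.2 fun i hi => by
    have := lt_length_of_mem_descSet hi
    omega

theorem dstat_eq_dstat_succ_add (w : List ℤ) (i : ℕ) :
    dstat w i = dstat w (i + 1) + if i ∈ descSet w then 1 else 0 := by
  simp only [dstat, card_filter, ← sum_ite_eq' (descSet w) i fun _ => 1, ← sum_add_distrib]
  exact sum_congr rfl fun i _ => by split_ifs <;> omega

theorem sum_range_dstat (w : List ℤ) : ∑ j ∈ range w.length, dstat w (j + 1) = maj w := by
  simp only [dstat, maj, card_filter]
  rw [sum_comm]
  refine sum_congr rfl fun i hi => ?_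
  have : (range w.length).filter (· + 1 ≤ i) = range i := by
    ext j
    have := lt_length_of_mem_descSet hi
    simp only [mem_filter, mem_range]
    omega
  rw [← card_filter, this, card_range]

/-- Pairs `(letter, label)`, ordered by decreasing label and then increasing letter: a labelling
`l` of `w` is compatible exactly when `w.zip l` is strictly increasing. -/
def LabelLT (a b : ℤ × ℕ) : Prop := b.2 < a.2 ∨ a.2 = b.2 ∧ a.1 < b.1

instance : DecidableRel LabelLT := fun a b => by unfold LabelLT; infer_instance

instance : IsTrans (ℤ × ℕ) LabelLT := ⟨fun _ _ _ => by unfold LabelLT; omega⟩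

instance : Std.Irrefl LabelLT := ⟨fun _ => by unfold LabelLT; omega⟩

theorem labelLT_trichotomous (a b : ℤ × ℕ) : a = b ∨ LabelLT a b ∨ LabelLT b a := by
  obtain ⟨x, i⟩ := a
  obtain ⟨y, j⟩ := b
  simp only [LabelLT, Prod.mk.injEq]
  omega

def IsCompatLabelling (w : List ℤ) (l : List ℕ) : Prop :=
  l.length = w.length ∧ (w.zip l).Pairwise LabelLT

instance (w : List ℤ) : DecidablePred (IsCompatLabelling w) := fun _ => by
  unfold IsCompatLabelling; infer_instance

theorem pairwise_zip_labelLT_iff {w : List ℤ} {l : List ℕ} (hw : w.Nodup)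
    (hl : l.length = w.length) :
    (w.zip l).Pairwise LabelLT ↔
      ∀ j (hj : j + 1 < l.length), l[j + 1] + (if j + 1 ∈ descSet w then 1 else 0) ≤ l[j] := by
  rw [← List.isChain_iff_pairwise, List.isChain_iff_getElem]
  simp only [List.length_zip, List.getElem_zip, LabelLT, hl, min_self]
  refine forall_congr' fun j => forall_congr' fun hj => ?_
  have hne : w[j] ≠ w[j + 1] := fun h => by
    have := (hw.getElem_inj_iff).1 h
    omega
  simp only [mem_descSet_iff hj]
  split_ifs <;> omega

def compatLabellings (w : List ℤ) (d : ℕ) : Finset (List ℕ) :=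
  (sumLists w.length d).filter (IsCompatLabelling w)

theorem mem_compatLabellings {w : List ℤ} {d : ℕ} {l : List ℕ} :
    l ∈ compatLabellings w d ↔ IsCompatLabelling w l ∧ l.sum = d := by
  simp only [compatLabellings, mem_filter, mem_sumLists, IsCompatLabelling]
  tauto

def addDstat (w : List ℤ) (g : List ℕ) : List ℕ := g.mapIdx fun j x => x + dstat w (j + 1)

def subDstat (w : List ℤ) (l : List ℕ) : List ℕ := l.mapIdx fun j x => x - dstat w (j + 1)

theorem sum_addDstat {w : List ℤ} {g : List ℕ} (hg : g.length = w.length) :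
    (addDstat w g).sum = g.sum + maj w := by
  rw [addDstat, List.sum_mapIdx_add, hg, sum_range_dstat]

theorem subDstat_addDstat (w : List ℤ) (g : List ℕ) : subDstat w (addDstat w g) = g := by
  refine List.ext_getElem (by simp [subDstat, addDstat]) fun j _ _ => ?_
  simp [subDstat, addDstat]

theorem IsCompatLabelling.dstat_le {w : List ℤ} {l : List ℕ} (hw : w.Nodup)
    (hl : IsCompatLabelling w l) : ∀ j (hj : j < l.length), dstat w (j + 1) ≤ l[j] := by
  have hstep := (pairwise_zip_labelLT_iff hw hl.1).1 hl.2
  have hlen := hl.1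
  suffices ∀ t j (hj : j < l.length), l.length = j + 1 + t → dstat w (j + 1) ≤ l[j] from
    fun j hj => this (l.length - (j + 1)) j hj (by omega)
  intro t
  induction t with
  | zero => intro j hj h; rw [dstat_eq_zero (by omega)]; exact Nat.zero_le _
  | succ t ih =>
    intro j hj h
    have := ih (j + 1) (by omega) (by omega)
    have := hstep j (by omega)
    have := dstat_eq_dstat_succ_add w (j + 1)
    omega

theorem IsCompatLabelling.addDstat_subDstat {w : List ℤ} {l : List ℕ} (hw : w.Nodup)
    (hl : IsCompatLabelling w l) : addDstat w (subDstat w l) = l := by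
  refine List.ext_getElem (by simp [addDstat, subDstat]) fun j _ hj => ?_
  simp only [addDstat, subDstat, List.getElem_mapIdx]
  have := hl.dstat_le hw j hj
  omega

theorem IsCompatLabelling.pairwise_ge_subDstat {w : List ℤ} {l : List ℕ} (hw : w.Nodup)
    (hl : IsCompatLabelling w l) : (subDstat w l).Pairwise (· ≥ ·) := by
  have hstep := (pairwise_zip_labelLT_iff hw hl.1).1 hl.2
  refine List.pairwise_ge_iff.2 fun j hj => ?_
  simp only [subDstat, List.length_mapIdx, List.getElem_mapIdx] at hj ⊢
  have := hl.dstat_le hw j (by omega)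
  have := hl.dstat_le hw (j + 1) hj
  have := hstep j hj
  have := dstat_eq_dstat_succ_add w (j + 1)
  omega

theorem isCompatLabelling_addDstat {w : List ℤ} {g : List ℕ} (hw : w.Nodup)
    (hg : g.length = w.length) (ha : g.Pairwise (· ≥ ·)) : IsCompatLabelling w (addDstat w g) := by
  have hlen : (addDstat w g).length = w.length := by simpa [addDstat] using hg
  refine ⟨hlen, (pairwise_zip_labelLT_iff hw hlen).2 fun j hj => ?_⟩
  simp only [addDstat, List.length_mapIdx, List.getElem_mapIdx] at hj ⊢
  have := List.pairwise_ge_iff.1 ha j hj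
  have := dstat_eq_dstat_succ_add w (j + 1)
  omega

theorem card_compatLabellings {w : List ℤ} (hw : w.Nodup) (d : ℕ) :
    #(compatLabellings w d) = if maj w ≤ d then #(antitoneLists w.length (d - maj w)) else 0 := by
  have hsum {l : List ℕ} (hl : IsCompatLabelling w l) : l.sum = (subDstat w l).sum + maj w := by
    conv_lhs => rw [← hl.addDstat_subDstat hw]
    exact sum_addDstat (by simpa [subDstat] using hl.1)
  split_ifs with hd
  · refine card_nbij' (subDstat w) (addDstat w) (fun l hl => ?_) (fun g hg => ?_)
      (fun l hl => (mem_compatLabellings.1 hl).1.addDstat_subDstat hw)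
      (fun g _ => subDstat_addDstat w g)
    · obtain ⟨hc, rfl⟩ := mem_compatLabellings.1 hl
      exact mem_antitoneLists.2
        ⟨by simpa [subDstat] using hc.1, hc.pairwise_ge_subDstat hw, by rw [hsum hc]; omega⟩
    · obtain ⟨hlen, ha, hg⟩ := mem_antitoneLists.1 hg
      exact mem_compatLabellings.2
        ⟨isCompatLabelling_addDstat hw hlen ha, by rw [sum_addDstat hlen]; omega⟩
  · refine card_eq_zero.2 (eq_empty_of_forall_notMem fun l hl => hd ?_)
    obtain ⟨hc, rfl⟩ := mem_compatLabellings.1 hl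
    rw [hsum hc]
    exact Nat.le_add_left _ _

noncomputable def compatGF (w : List ℤ) : ℚ⟦X⟧ :=
  PowerSeries.mk fun d => (#(compatLabellings w d) : ℚ)

theorem compatGF_eq {w : List ℤ} (hw : w.Nodup) :
    compatGF w = PowerSeries.X ^ maj w * antitoneGF w.length := by
  ext d
  simp only [compatGF, antitoneGF, PowerSeries.coeff_mk, PowerSeries.coeff_X_pow_mul',
    card_compatLabellings hw]
  split_ifs <;> simp

/-! ### Restricting and merging labelled words -/

def labelLE (a b : ℤ × ℕ) : Bool := decide (a = b ∨ LabelLT a b)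

theorem pairwise_labelLT_merge {u v : List (ℤ × ℕ)} (hu : u.Pairwise LabelLT)
    (hv : v.Pairwise LabelLT) (huv : (u ++ v).Nodup) : (u.merge v labelLE).Pairwise LabelLT := by
  have hle : (u.merge v labelLE).Pairwise (labelLE · ·) := by
    refine List.pairwise_merge (fun a b c hab hbc => ?_) (fun a b => ?_) u v
      (hu.imp fun h => by simp [labelLE, h]) (hv.imp fun h => by simp [labelLE, h])
    · simp only [labelLE, decide_eq_true_eq] at *
      rcases hab with rfl | hab
      · exact hbc
      · rcases hbc with rfl | hbc
        · exact Or.inr hab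
        · exact Or.inr (_root_.trans hab hbc)
    · rcases labelLT_trichotomous a b with h | h | h <;> simp [labelLE, h]
  have hnd : (u.merge v labelLE).Nodup := (List.merge_perm_append labelLE).nodup_iff.2 huv
  refine (hle.and hnd).imp fun ⟨h, hne⟩ => ?_
  simpa [labelLE, hne] using h

theorem filter_eq_of_perm_append {θ : List ℤ} {u a b : List (ℤ × ℕ)} (hu : u.Pairwise LabelLT)
    (ha : a.Pairwise LabelLT) (hp : u.Perm (a ++ b)) (haθ : ∀ x ∈ a, x.1 ∈ θ)
    (hbθ : ∀ x ∈ b, x.1 ∉ θ) : u.filter (·.1 ∈ θ) = a := by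
  refine (hu.filter _).eq_of_mem_iff ha fun x => ?_
  simp only [List.mem_filter, hp.mem_iff, List.mem_append, decide_eq_true_eq]
  exact ⟨fun ⟨hx, h⟩ => hx.resolve_right fun hb => hbθ x hb h, fun hx => ⟨Or.inl hx, haθ x hx⟩⟩

theorem filter_append_filter_perm {θ π : List ℤ} {u : List (ℤ × ℕ)}
    (hu : (u.map Prod.fst).Perm (θ ++ π)) (h : (θ ++ π).Nodup) :
    (u.filter (·.1 ∈ θ) ++ u.filter (·.1 ∈ π)).Perm u := by
  have : u.filter (·.1 ∈ π) = u.filter fun x => !decide (x.1 ∈ θ) := by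
    refine List.filter_congr fun x hx => ?_
    have hx' : x.1 ∈ θ ++ π := hu.subset (List.mem_map_of_mem hx)
    have := List.disjoint_of_nodup_append h (a := x.1)
    simp only [List.mem_append] at hx'
    by_cases hθ : x.1 ∈ θ <;> simp_all
  rw [this]
  exact List.filter_append_perm _ u

theorem isCompatLabelling_map_fst_map_snd {u : List (ℤ × ℕ)} :
    IsCompatLabelling (u.map Prod.fst) (u.map Prod.snd) ↔ u.Pairwise LabelLT := by
  simp [IsCompatLabelling, ← List.zip_of_prod rfl rfl]

def labelsOn (θ : List ℤ) (u : List (ℤ × ℕ)) : List ℕ := (u.filter (·.1 ∈ θ)).map Prod.snd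

theorem map_fst_filter_eq {θ : List ℤ} {u : List (ℤ × ℕ)} (hu : (u.map Prod.fst).Nodup)
    (hθ : θ.Sublist (u.map Prod.fst)) : (u.filter (·.1 ∈ θ)).map Prod.fst = θ := by
  conv_rhs => rw [← List.filter_mem_eq_of_sublist hθ hu, List.filter_map]
  rfl

theorem zip_labelsOn {θ : List ℤ} {u : List (ℤ × ℕ)} (hu : (u.map Prod.fst).Nodup)
    (hθ : θ.Sublist (u.map Prod.fst)) : θ.zip (labelsOn θ u) = u.filter (·.1 ∈ θ) :=
  (List.zip_of_prod (map_fst_filter_eq hu hθ) rfl).symm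

theorem length_labelsOn {θ : List ℤ} {u : List (ℤ × ℕ)} (hu : (u.map Prod.fst).Nodup)
    (hθ : θ.Sublist (u.map Prod.fst)) : (labelsOn θ u).length = θ.length := by
  rw [labelsOn, List.length_map, ← List.length_map (f := Prod.fst), map_fst_filter_eq hu hθ]

theorem IsCompatLabelling.labelsOn {θ σ : List ℤ} {l : List ℕ} (hσ : σ.Nodup)
    (hθ : θ.Sublist σ) (hl : IsCompatLabelling σ l) :
    IsCompatLabelling θ (labelsOn θ (σ.zip l)) := by
  rw [← List.map_fst_zip hl.1.ge] at hσ hθ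
  exact ⟨length_labelsOn hσ hθ, zip_labelsOn hσ hθ ▸ hl.2.filter _⟩

theorem sum_labelsOn_add_sum_labelsOn {θ π σ : List ℤ} {l : List ℕ} (h : (θ ++ π).Nodup)
    (hσ : σ.Perm (θ ++ π)) (hl : l.length = σ.length) :
    (labelsOn θ (σ.zip l)).sum + (labelsOn π (σ.zip l)).sum = l.sum := by
  rw [← List.map_fst_zip hl.ge] at hσ
  have := ((filter_append_filter_perm hσ h).map Prod.snd).sum_eq
  rwa [List.map_append, List.sum_append, List.map_snd_zip hl.le] at this

def mergeLabels (θ π : List ℤ) (l₁ l₂ : List ℕ) : List (ℤ × ℕ) :=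
  (θ.zip l₁).merge (π.zip l₂) labelLE

theorem mergeLabels_perm (θ π : List ℤ) (l₁ l₂ : List ℕ) :
    (mergeLabels θ π l₁ l₂).Perm (θ.zip l₁ ++ π.zip l₂) :=
  List.merge_perm_append labelLE

theorem pairwise_mergeLabels {θ π : List ℤ} {l₁ l₂ : List ℕ} (h : (θ ++ π).Nodup)
    (hl₁ : IsCompatLabelling θ l₁) (hl₂ : IsCompatLabelling π l₂) :
    (mergeLabels θ π l₁ l₂).Pairwise LabelLT := by
  refine pairwise_labelLT_merge hl₁.2 hl₂.2 (List.Nodup.of_map Prod.fst ?_)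
  rwa [List.map_append, List.map_fst_zip hl₁.1.ge, List.map_fst_zip hl₂.1.ge]

theorem filter_mergeLabels_left {θ π : List ℤ} {l₁ l₂ : List ℕ} (h : (θ ++ π).Nodup)
    (hl₁ : IsCompatLabelling θ l₁) (hl₂ : IsCompatLabelling π l₂) :
    (mergeLabels θ π l₁ l₂).filter (·.1 ∈ θ) = θ.zip l₁ :=
  filter_eq_of_perm_append (pairwise_mergeLabels h hl₁ hl₂) hl₁.2 (mergeLabels_perm θ π l₁ l₂)
    (fun _ hx => (List.of_mem_zip hx).1)
    (fun _ hx hθ => List.disjoint_of_nodup_append h hθ (List.of_mem_zip hx).1)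

theorem filter_mergeLabels_right {θ π : List ℤ} {l₁ l₂ : List ℕ} (h : (θ ++ π).Nodup)
    (hl₁ : IsCompatLabelling θ l₁) (hl₂ : IsCompatLabelling π l₂) :
    (mergeLabels θ π l₁ l₂).filter (·.1 ∈ π) = π.zip l₂ :=
  filter_eq_of_perm_append (pairwise_mergeLabels h hl₁ hl₂) hl₂.2
    ((mergeLabels_perm θ π l₁ l₂).trans List.perm_append_comm)
    (fun _ hx => (List.of_mem_zip hx).1)
    (fun _ hx hπ => List.disjoint_of_nodup_append h (List.of_mem_zip hx).1 hπ)

theorem mem_shuffles {θ π σ : List ℤ} :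
    σ ∈ shuffles θ π ↔ σ.Perm (θ ++ π) ∧ θ.Sublist σ ∧ π.Sublist σ := by
  rw [shuffles, mem_filter, List.mem_toFinset, List.mem_permutations]

theorem map_fst_mergeLabels_mem_shuffles {θ π : List ℤ} {l₁ l₂ : List ℕ} (h : (θ ++ π).Nodup)
    (hl₁ : IsCompatLabelling θ l₁) (hl₂ : IsCompatLabelling π l₂) :
    (mergeLabels θ π l₁ l₂).map Prod.fst ∈ shuffles θ π := by
  have hsub {s : List ℤ} {l : List ℕ} (hl : s.length ≤ l.length)
      (hf : (mergeLabels θ π l₁ l₂).filter (·.1 ∈ s) = s.zip l) :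
      s.Sublist ((mergeLabels θ π l₁ l₂).map Prod.fst) := by
    rw [← List.map_fst_zip hl, ← hf]
    exact List.filter_sublist.map _
  refine mem_shuffles.2 ⟨?_, hsub hl₁.1.ge (filter_mergeLabels_left h hl₁ hl₂),
    hsub hl₂.1.ge (filter_mergeLabels_right h hl₁ hl₂)⟩
  have := (mergeLabels_perm θ π l₁ l₂).map Prod.fst
  rwa [List.map_append, List.map_fst_zip hl₁.1.ge, List.map_fst_zip hl₂.1.ge] at this

theorem mergeLabels_labelsOn {θ π σ : List ℤ} {l : List ℕ} (h : (θ ++ π).Nodup)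
    (hσ : σ ∈ shuffles θ π) (hl : IsCompatLabelling σ l) :
    mergeLabels θ π (labelsOn θ (σ.zip l)) (labelsOn π (σ.zip l)) = σ.zip l := by
  obtain ⟨hperm, hθ, hπ⟩ := mem_shuffles.1 hσ
  have hnd : ((σ.zip l).map Prod.fst).Nodup := by
    rw [List.map_fst_zip hl.1.ge]
    exact hperm.nodup_iff.2 h
  rw [← List.map_fst_zip hl.1.ge] at hperm hθ hπ
  have hsplit := filter_append_filter_perm hperm h
  rw [mergeLabels, zip_labelsOn hnd hθ, zip_labelsOn hnd hπ]
  refine (pairwise_labelLT_merge (hl.2.filter _) (hl.2.filter _) ?_).eq_of_mem_iff hl.2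
    fun x => ((List.merge_perm_append labelLE).trans hsplit).mem_iff
  exact hsplit.nodup_iff.2 (List.Nodup.of_map Prod.fst hnd)

theorem sum_card_compatLabellings_shuffles {θ π : List ℤ} (h : (θ ++ π).Nodup) (d : ℕ) :
    ∑ σ ∈ shuffles θ π, #(compatLabellings σ d) =
      ∑ p ∈ antidiagonal d, #(compatLabellings θ p.1) * #(compatLabellings π p.2) := by
  simp_rw [← card_product]
  rw [← card_sigma, ← card_sigma]
  refine card_nbij'
    (fun x => ⟨((labelsOn θ (x.1.zip x.2)).sum, (labelsOn π (x.1.zip x.2)).sum),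
      (labelsOn θ (x.1.zip x.2), labelsOn π (x.1.zip x.2))⟩)
    (fun y => ⟨(mergeLabels θ π y.2.1 y.2.2).map Prod.fst,
      (mergeLabels θ π y.2.1 y.2.2).map Prod.snd⟩) ?_ ?_ ?_ ?_ <;>
  simp only [Set.MapsTo, Set.LeftInvOn, coe_sigma, Set.mem_sigma_iff, mem_coe, mem_product,
    HasAntidiagonal.mem_antidiagonal, mem_compatLabellings, Sigma.forall, Prod.forall, and_imp]
  · rintro σ l hσ hl rfl
    obtain ⟨hperm, hθ, hπ⟩ := mem_shuffles.1 hσ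
    have hσnd : σ.Nodup := hperm.nodup_iff.2 h
    exact ⟨sum_labelsOn_add_sum_labelsOn h hperm hl.1, ⟨hl.labelsOn hσnd hθ, trivial⟩,
      hl.labelsOn hσnd hπ, trivial⟩
  · rintro d₁ d₂ l₁ l₂ rfl hl₁ rfl hl₂ rfl
    refine ⟨map_fst_mergeLabels_mem_shuffles h hl₁ hl₂,
      isCompatLabelling_map_fst_map_snd.2 (pairwise_mergeLabels h hl₁ hl₂), ?_⟩
    rw [((mergeLabels_perm θ π l₁ l₂).map Prod.snd).sum_eq, List.map_append, List.sum_append,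
      List.map_snd_zip hl₁.1.le, List.map_snd_zip hl₂.1.le]
  · rintro σ l hσ hl rfl
    rw [mergeLabels_labelsOn h hσ hl, List.map_fst_zip hl.1.ge, List.map_snd_zip hl.1.le]
  · rintro d₁ d₂ l₁ l₂ rfl hl₁ rfl hl₂ rfl
    simp only [← List.zip_of_prod rfl rfl, labelsOn, filter_mergeLabels_left h hl₁ hl₂,
      filter_mergeLabels_right h hl₁ hl₂, List.map_snd_zip hl₁.1.le, List.map_snd_zip hl₂.1.le]

/-! ### Shuffles of two words -/

theorem sum_compatGF_shuffles {θ π : List ℤ} (h : (θ ++ π).Nodup) :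
    ∑ σ ∈ shuffles θ π, compatGF σ = compatGF θ * compatGF π := by
  ext d
  rw [map_sum, PowerSeries.coeff_mul]
  simp only [compatGF, PowerSeries.coeff_mk]
  exact_mod_cast sum_card_compatLabellings_shuffles h d

theorem sum_X_pow_maj_shuffles_mul_qPochhammer {θ π : List ℤ} (h : (θ ++ π).Nodup) :
    (∑ σ ∈ shuffles θ π, (X : ℚ[X]) ^ maj σ) * (qPochhammer θ.length * qPochhammer π.length) =
      X ^ (maj θ + maj π) * qPochhammer (θ.length + π.length) := by
  obtain ⟨hθ, hπ, -⟩ := List.nodup_append'.1 h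
  set S : ℚ⟦X⟧ := ∑ σ ∈ shuffles θ π, PowerSeries.X ^ maj σ
  have hS : S * antitoneGF (θ.length + π.length) =
      PowerSeries.X ^ (maj θ + maj π) * (antitoneGF θ.length * antitoneGF π.length) := by
    rw [sum_mul, pow_add, mul_mul_mul_comm, ← compatGF_eq hθ, ← compatGF_eq hπ,
      ← sum_compatGF_shuffles h]
    refine sum_congr rfl fun σ hσ => ?_
    have hperm := (mem_shuffles.1 hσ).1
    rw [compatGF_eq (hperm.nodup_iff.2 h), hperm.length_eq, List.length_append, mul_comm]
  apply Polynomial.coe_inj.1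
  simp only [← Polynomial.coeToPowerSeries.ringHom_apply, map_mul, map_sum, map_pow]
  simp only [Polynomial.coeToPowerSeries.ringHom_apply, Polynomial.coe_X]
  set Pθ : ℚ⟦X⟧ := (qPochhammer θ.length : ℚ⟦X⟧)
  set Pπ : ℚ⟦X⟧ := (qPochhammer π.length : ℚ⟦X⟧)
  set Pn : ℚ⟦X⟧ := (qPochhammer (θ.length + π.length) : ℚ⟦X⟧)
  -- multiply `hS` by `Pθ * Pπ * Pn` and cancel each `antitoneGF m` against its `qPochhammer m`
  linear_combination Pθ * Pπ * Pn * hS -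
    S * Pθ * Pπ * antitoneGF_mul_qPochhammer (θ.length + π.length) +
    PowerSeries.X ^ (maj θ + maj π) * Pn * antitoneGF π.length * Pπ *
      antitoneGF_mul_qPochhammer θ.length +
    PowerSeries.X ^ (maj θ + maj π) * Pn * antitoneGF_mul_qPochhammer π.length

theorem sum_X_pow_maj_shuffles_mul_qFact {θ π : List ℤ} (h : (θ ++ π).Nodup) :
    (∑ σ ∈ shuffles θ π, (X : ℚ[X]) ^ maj σ) * (qFact θ.length * qFact π.length) =
      qFact (θ.length + π.length) * X ^ (maj θ + maj π) := by
  have := sum_X_pow_maj_shuffles_mul_qPochhammer h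
  simp only [qPochhammer_eq, pow_add (1 - X : ℚ[X])] at this
  have hne : (1 - X : ℚ[X]) ^ (θ.length + π.length) ≠ 0 := by
    refine pow_ne_zero _ fun h0 => ?_
    simpa using congrArg (eval 0) h0
  refine mul_left_cancel₀ hne ?_
  linear_combination this

/-! ### Shuffles of several words -/

theorem mem_shufflesMulti {L : List (List ℤ)} {σ : List ℤ} :
    σ ∈ shufflesMulti L ↔ σ.Perm L.flatten ∧ ∀ w ∈ L, w.Sublist σ := by
  rw [shufflesMulti, mem_filter, List.mem_toFinset, List.mem_permutations]

theorem shufflesMulti_cons {w : List ℤ} {L : List (List ℤ)} (h : (w ++ L.flatten).Nodup) :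
    shufflesMulti (w :: L) = (shufflesMulti L).biUnion (shuffles w) := by
  have hdisj := List.disjoint_of_nodup_append h
  ext σ
  simp only [mem_biUnion, mem_shufflesMulti, mem_shuffles, List.flatten_cons, List.mem_cons,
    forall_eq_or_imp]
  constructor
  · rintro ⟨hperm, hw, hL⟩
    have hτ : (σ.filter (· ∈ L.flatten)).Perm L.flatten := by
      convert hperm.filter (· ∈ L.flatten)
      rw [List.filter_append, List.filter_eq_nil_iff.2 fun x hx => by simpa using hdisj hx,
        List.filter_eq_self.2 fun x hx => by simpa using hx, List.nil_append]
    refine ⟨σ.filter (· ∈ L.flatten), ⟨hτ, fun u hu => ?_⟩,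
      hperm.trans (hτ.append_left w).symm, hw, List.filter_sublist⟩
    have hu' : u.filter (· ∈ L.flatten) = u :=
      List.filter_eq_self.2 fun x hx => by simpa using List.mem_flatten_of_mem hu hx
    simpa only [hu'] using (hL u hu).filter (· ∈ L.flatten)
  · rintro ⟨τ, ⟨hτ, hL⟩, hperm, hw, hτσ⟩
    exact ⟨hperm.trans (hτ.append_left w), hw, fun u hu => (hL u hu).trans hτσ⟩

theorem pairwiseDisjoint_shuffles {w : List ℤ} {L : List (List ℤ)}
    (h : (w ++ L.flatten).Nodup) :
    (shufflesMulti L : Set (List ℤ)).PairwiseDisjoint (shuffles w) := by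
  intro τ hτ τ' hτ' hne
  refine disjoint_left.2 fun σ hσ hσ' => hne ?_
  obtain ⟨hperm, -, hτσ⟩ := mem_shuffles.1 hσ
  have hσnd := hperm.nodup_iff.2 (((mem_shufflesMulti.1 hτ).1.append_left w).nodup_iff.2 h)
  rw [← List.filter_mem_eq_of_sublist hτσ hσnd,
    ← List.filter_mem_eq_of_sublist (mem_shuffles.1 hσ').2.2 hσnd]
  refine List.filter_congr fun x _ => ?_
  simp [((mem_shufflesMulti.1 hτ).1.trans (mem_shufflesMulti.1 hτ').1.symm).mem_iff]

theorem sum_X_pow_maj_shufflesMulti_mul {L : List (List ℤ)} (h : L.flatten.Nodup) :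
    (∑ σ ∈ shufflesMulti L, (X : ℚ[X]) ^ maj σ) * (L.map fun w => qFact w.length).prod =
      qFact L.flatten.length * X ^ (L.map maj).sum := by
  induction L with
  | nil => simp [shufflesMulti, maj, descSet, qFact]
  | cons w L ih =>
    rw [List.flatten_cons] at h
    have hsum : (∑ τ ∈ shufflesMulti L, ∑ σ ∈ shuffles w τ, (X : ℚ[X]) ^ maj σ) *
        (qFact w.length * qFact L.flatten.length) =
          qFact (w.length + L.flatten.length) * X ^ maj w *
            ∑ τ ∈ shufflesMulti L, (X : ℚ[X]) ^ maj τ := by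
      rw [sum_mul, mul_sum]
      refine sum_congr rfl fun τ hτ => ?_
      have hperm := (mem_shufflesMulti.1 hτ).1
      have := sum_X_pow_maj_shuffles_mul_qFact ((hperm.append_left w).nodup_iff.2 h)
      rw [hperm.length_eq] at this
      rw [this, pow_add, mul_assoc]
    refine mul_left_cancel₀ (qFact_ne_zero L.flatten.length) ?_
    rw [shufflesMulti_cons h, sum_biUnion (pairwiseDisjoint_shuffles h), List.flatten_cons,
      List.length_append]
    simp only [List.map_cons, List.prod_cons, List.sum_cons, pow_add]
    linear_combination (L.map fun w => qFact w.length).prod * hsum +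
      qFact (w.length + L.flatten.length) * X ^ maj w * ih (List.nodup_append'.1 h).2.1

theorem W_eq (n : ℕ) : W n = (List.range n).map fun i : ℕ => (i : ℤ) + 1 := by
  unfold W
  induction n with
  | zero => rfl
  | succ m ih => rw [List.range_succ]; simp_all

theorem nodup_W (n : ℕ) : (W n).Nodup := by
  rw [W_eq]
  exact List.nodup_range.map fun i j h => by simpa using h

theorem length_W (n : ℕ) : (W n).length = n := by
  simp [W_eq]

theorem garsia_gessel_general (n : ℕ) (L : List (List ℤ)) (hperm : L.flatten.Perm (W n)) :
    ∑ σ ∈ shufflesMulti L, (X : Polynomial ℚ) ^ (maj σ) =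
      (qFact n / (L.map (fun w => qFact w.length)).prod) *
        (X : Polynomial ℚ) ^ ((L.map maj).sum) := by
  set P := (L.map fun w => qFact w.length).prod
  have hmul := sum_X_pow_maj_shufflesMulti_mul (hperm.nodup_iff.2 (nodup_W n))
  rw [hperm.length_eq, length_W] at hmul
  have hP : P.eval 0 = 1 := by
    simp [P, eval_list_prod, Function.comp_def, eval_zero_qFact]
  have hP0 : P ≠ 0 := fun h0 => by simp [h0] at hP
  obtain ⟨C, hC⟩ := dvd_of_dvd_mul_X_pow (by rw [hP]; exact one_ne_zero) (Dvd.intro_left _ hmul)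
  rw [hC, mul_div_cancel_left₀ _ hP0]
  refine mul_right_cancel₀ hP0 ?_
  rw [hmul, hC]
  ring

/-- Garsia–Gessel: for words π₁,...,π_k forming ordered complementary subsets of [n],
the generating function for maj over all shuffles of π₁,...,π_k is the q-multinomial
coefficient [n; a₁,...,a_k]_q times q^(maj π₁ + ... + maj π_k). -/
theorem garsia_gessel (n k : ℕ) (L : List (List ℤ)) (hk : L.length = k)
    (hperm : L.flatten.Perm (W n)) :
    ∑ σ ∈ shufflesMulti L, (X : Polynomial ℚ) ^ (maj σ) =
      (qFact n / (L.map (fun w => qFact w.length)).prod) *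
        (X : Polynomial ℚ) ^ ((L.map maj).sum) :=
  garsia_gessel_general n L hperm
end

section
/- Let σ be a word of n−1 distinct integers, let r be an integer greater than every letter of σ, and let s be an integer less than every letter of σ. Then for every position k with 1 ≤ k ≤ n−1, mi(σ,k,r) = mi(σ,k,s) + 1. -/
open Polynomial

/-!
Inserting `r` or `s` at the same position `k` gives two words that differ only in their `k`-th
letter, so only the adjacent pairs at positions `k - 1` and `k` can have different descent status.
Since `r` exceeds and `s` undercuts its neighbours, `k` is a descent after inserting `r` but not
after inserting `s`, while `k - 1` is a descent after inserting `s` but not after inserting `r`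
(or is `0`, which contributes nothing). The major indices therefore differ by `k - (k - 1) = 1`.
-/

namespace List

variable {α : Type*} {l : List α} {x d : α} {p : ℕ}

theorem getD_insertIdx (hp : p ≤ l.length) (j : ℕ) :
    (l.insertIdx p x).getD j d =
      if j < p then l.getD j d else if j = p then x else l.getD (j - 1) d := by
  simp only [getD_eq_getElem?_getD, getElem?_insertIdx]
  split_ifs <;> first | rfl | omega

theorem getD_insertIdx_of_lt {j : ℕ} (hj : j < p) : (l.insertIdx p x).getD j d = l.getD j d := by
  simp only [getD_eq_getElem?_getD, getElem?_insertIdx_of_lt hj]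

theorem getD_insertIdx_self (hp : p ≤ l.length) : (l.insertIdx p x).getD p d = x := by
  rw [getD_insertIdx hp, if_neg (lt_irrefl p), if_pos rfl]

theorem getD_insertIdx_succ (hp : p ≤ l.length) :
    (l.insertIdx p x).getD (p + 1) d = l.getD p d := by
  rw [getD_insertIdx hp, if_neg (by omega), if_neg (by omega), Nat.add_sub_cancel]

theorem getD_mem {i : ℕ} (hi : i < l.length) : l.getD i d ∈ l := by
  rw [getD_eq_getElem _ _ hi]
  exact getElem_mem hi

end List

def descWeight (w : List ℤ) (i : ℕ) : ℤ := if w.getD (i - 1) 0 > w.getD i 0 then i else 0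

theorem descWeight_zero (w : List ℤ) : descWeight w 0 = 0 := by
  simp [descWeight]

theorem maj_eq_sum_descWeight (w : List ℤ) :
    (maj w : ℤ) = ∑ i ∈ Finset.range w.length, descWeight w i := by
  have hIcc : Finset.Icc 1 (w.length - 1) = (Finset.range w.length).erase 0 := by
    ext i; simp only [Finset.mem_Icc, Finset.mem_erase, Finset.mem_range]; omega
  rw [← Finset.sum_erase _ (descWeight_zero w), ← hIcc, maj, descSet, Finset.sum_filter,
    Nat.cast_sum]
  exact Finset.sum_congr rfl fun i _ => by unfold descWeight; split_ifs <;> simp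

theorem maj_sub_maj_of_getD_eq {u v : List ℤ} {p : ℕ} (hlen : u.length = v.length)
    (hp : p + 1 < u.length) (huv : ∀ j ≠ p, u.getD j 0 = v.getD j 0) :
    (maj u : ℤ) - maj v =
      (descWeight u p - descWeight v p) + (descWeight u (p + 1) - descWeight v (p + 1)) := by
  rw [maj_eq_sum_descWeight, maj_eq_sum_descWeight, ← hlen, ← Finset.sum_sub_distrib]
  refine Finset.sum_eq_add p (p + 1) (by omega) (fun i _ hi => ?_)
    (fun h => absurd (Finset.mem_range.2 (by omega)) h)
    (fun h => absurd (Finset.mem_range.2 hp) h)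
  rw [descWeight, descWeight, huv i hi.1, huv (i - 1) (by omega), sub_self]

section insertIdx

variable {l : List ℤ} {x : ℤ} {p : ℕ}

theorem descWeight_insertIdx_of_forall_lt (hx : ∀ y ∈ l, y < x) (hp : p ≤ l.length) :
    descWeight (l.insertIdx p x) p = 0 := by
  rcases Nat.eq_zero_or_pos p with rfl | hp0
  · exact descWeight_zero _
  · have hprev := hx _ (List.getD_mem (d := 0) (i := p - 1) (by omega))
    rw [descWeight, List.getD_insertIdx_of_lt (by omega), List.getD_insertIdx_self hp,
      if_neg (not_lt.2 hprev.le)]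

theorem descWeight_insertIdx_succ_of_forall_lt (hx : ∀ y ∈ l, y < x) (hp : p < l.length) :
    descWeight (l.insertIdx p x) (p + 1) = p + 1 := by
  have hnext := hx _ (List.getD_mem (d := 0) hp)
  rw [descWeight, Nat.add_sub_cancel, List.getD_insertIdx_self hp.le,
    List.getD_insertIdx_succ hp.le, if_pos hnext, Nat.cast_succ]

theorem descWeight_insertIdx_of_forall_gt (hx : ∀ y ∈ l, x < y) (hp : p ≤ l.length) :
    descWeight (l.insertIdx p x) p = p := by
  rcases Nat.eq_zero_or_pos p with rfl | hp0
  · simpa using descWeight_zero _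
  · have hprev := hx _ (List.getD_mem (d := 0) (i := p - 1) (by omega))
    rw [descWeight, List.getD_insertIdx_of_lt (by omega), List.getD_insertIdx_self hp,
      if_pos hprev]

theorem descWeight_insertIdx_succ_of_forall_gt (hx : ∀ y ∈ l, x < y) (hp : p < l.length) :
    descWeight (l.insertIdx p x) (p + 1) = 0 := by
  have hnext := hx _ (List.getD_mem (d := 0) hp)
  rw [descWeight, Nat.add_sub_cancel, List.getD_insertIdx_self hp.le,
    List.getD_insertIdx_succ hp.le, if_neg (not_lt.2 hnext.le)]

end insertIdx

theorem mi_max_eq_mi_min_add_one_general (n : ℕ) (σ : List ℤ)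
    (hlen : σ.length + 1 = n) (r s : ℤ)
    (hr : ∀ x ∈ σ, x < r) (hs : ∀ x ∈ σ, s < x)
    (k : ℕ) (hk1 : 1 ≤ k) (hk : k ≤ n - 1) :
    mi σ k r = mi σ k s + 1 := by
  have hp : k - 1 < σ.length := by omega
  have hlen_ins (x : ℤ) : (σ.insertIdx (k - 1) x).length = σ.length + 1 :=
    List.length_insertIdx_of_le_length hp.le x
  have hmaj := maj_sub_maj_of_getD_eq (u := σ.insertIdx (k - 1) r) (v := σ.insertIdx (k - 1) s)
    (p := k - 1) (by rw [hlen_ins, hlen_ins]) (by rw [hlen_ins]; omega)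
    (fun j hj => by simp only [List.getD_insertIdx hp.le, hj, if_false])
  rw [descWeight_insertIdx_of_forall_lt hr hp.le, descWeight_insertIdx_of_forall_gt hs hp.le,
    descWeight_insertIdx_succ_of_forall_lt hr hp, descWeight_insertIdx_succ_of_forall_gt hs hp]
    at hmaj
  simp only [mi]
  linarith

/-- If r is greater than every letter of σ and s is less than every letter of σ, then
for every position k with 1 ≤ k ≤ n-1, mi(σ,k,r) = mi(σ,k,s) + 1. -/
theorem mi_max_eq_mi_min_add_one (n : ℕ) (σ : List ℤ) (hnd : σ.Nodup)
    (hlen : σ.length + 1 = n) (r s : ℤ)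
    (hr : ∀ x ∈ σ, x < r) (hs : ∀ x ∈ σ, s < x)
    (k : ℕ) (hk1 : 1 ≤ k) (hk : k ≤ n - 1) :
    mi σ k r = mi σ k s + 1 :=
  mi_max_eq_mi_min_add_one_general n σ hlen r s hr hs k hk1 hk
end

section
/- Let σ be a word of n−1 distinct integers and let r be an integer greater than every letter of σ. Then for every k with 1 ≤ k ≤ n−1, the set of the first k entries of MIS(σ,r), i.e., {mi(σ,1,r), ..., mi(σ,k,r)}, equals the integer interval {d_k(σ)+1, d_k(σ)+2, ..., d_k(σ)+k}. -/
open Polynomial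

/-!
Insert the maximal letter `r` into `σ` at 0-based position `p < |σ|`. The letter `r` creates
the descent `p + 1`, kills the descent `p` of `σ` (if any), leaves the descents below `p` in
place and shifts those at least `p + 1` up by one. Hence
`mi(σ, p + 1, r) = p + 1 + d_{p+1}(σ) - [p ∈ Des σ] p`, and since `d_p = d_{p+1} + [p ∈ Des σ]`,
the new value `mi(σ, k + 1, r)` extends the interval `[d_k + 1, d_k + k]` of the previous values
either at the top (if `k ∉ Des σ`) or at the bottom (if `k ∈ Des σ`).
-/

theorem List.getD_insertIdx_s7 {α : Type*} (l : List α) (x d : α) {i : ℕ} (hi : i ≤ l.length)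
    (j : ℕ) :
    (l.insertIdx i x).getD j d =
      if j < i then l.getD j d else if j = i then x else l.getD (j - 1) d := by
  simp only [List.getD_eq_getElem?_getD, List.getElem?_insertIdx]
  split_ifs <;> simp_all

theorem Finset.sum_filter_le_eq_add_ite {M : Type*} [AddCommMonoid M] (s : Finset ℕ)
    (f : ℕ → M) (k : ℕ) :
    ∑ i ∈ s with k ≤ i, f i = ∑ i ∈ s with k + 1 ≤ i, f i + if k ∈ s then f k else 0 := by
  rw [← Finset.sum_filter_add_sum_filter_not (s.filter (k ≤ ·)) (k + 1 ≤ ·),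
    Finset.filter_filter, Finset.filter_filter, Finset.sum_filter (fun x => k ≤ x ∧ ¬k + 1 ≤ x),
    ← Finset.sum_ite_eq']
  congr 1
  · exact Finset.sum_congr (Finset.filter_congr fun i _ => by omega) fun _ _ => rfl
  · exact Finset.sum_congr rfl fun i _ => if_congr (by omega) rfl rfl

theorem mem_descSet {w : List ℤ} {i : ℕ} :
    i ∈ descSet w ↔ 1 ≤ i ∧ i + 1 ≤ w.length ∧ w.getD i 0 < w.getD (i - 1) 0 := by
  simp only [descSet, Finset.mem_filter, Finset.mem_Icc]
  omega

theorem dstat_eq_add_ite (w : List ℤ) (k : ℕ) :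
    dstat w k = dstat w (k + 1) + if k ∈ descSet w then 1 else 0 := by
  simp only [dstat, Finset.card_eq_sum_ones]
  exact Finset.sum_filter_le_eq_add_ite _ _ k

section InsertMax

variable {σ : List ℤ} {r : ℤ}

theorem descSet_insertIdx_of_forall_lt (hr : ∀ x ∈ σ, x < r) {p : ℕ} (hp : p < σ.length) :
    descSet (σ.insertIdx p r) =
      ({i ∈ descSet σ | i < p} ∪ {p + 1}) ∪ {i ∈ descSet σ | p + 1 ≤ i}.image (· + 1) := by
  have hlt : ∀ j, j < σ.length → σ.getD j 0 < r := fun j hj =>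
    hr _ (by rw [List.getD_eq_getElem _ _ hj]; exact List.getElem_mem hj)
  ext i
  simp only [Finset.mem_union, Finset.mem_filter, Finset.mem_singleton, Finset.mem_image,
    mem_descSet, List.length_insertIdx_of_le_length hp.le, List.getD_insertIdx_s7 σ r 0 hp.le]
  constructor
  · rintro ⟨hi1, hi2, hd⟩
    rcases lt_trichotomy i p with h | rfl | h
    · simp only [h, if_true, show i - 1 < p by omega] at hd
      exact Or.inl (Or.inl ⟨⟨hi1, by omega, hd⟩, h⟩)
    · simp only [lt_irrefl, if_true, if_false, show i - 1 < i by omega] at hd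
      exact absurd (hlt (i - 1) (by omega)) hd.not_gt
    · rcases Nat.lt_or_ge (p + 1) i with h' | h'
      · refine Or.inr ⟨i - 1, ⟨⟨by omega, by omega, ?_⟩, by omega⟩, by omega⟩
        simpa [show ¬ i < p by omega, show i ≠ p by omega, show ¬ i - 1 < p by omega,
          show i - 1 ≠ p by omega] using hd
      · exact Or.inl (Or.inr (by omega))
  · rintro ((⟨⟨hi1, hi2, hd⟩, hip⟩ | rfl) | ⟨a, ⟨⟨ha1, ha2, hd⟩, hap⟩, rfl⟩)
    · refine ⟨hi1, by omega, ?_⟩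
      simpa [hip, show i - 1 < p by omega] using hd
    · refine ⟨by omega, by omega, ?_⟩
      simpa using hlt p hp
    · refine ⟨by omega, by omega, ?_⟩
      simpa [show ¬ a + 1 < p by omega, show a + 1 ≠ p by omega, show ¬ a < p by omega,
        show a ≠ p by omega] using hd

theorem maj_insertIdx_of_forall_lt (hr : ∀ x ∈ σ, x < r) {p : ℕ} (hp : p < σ.length) :
    maj (σ.insertIdx p r) + (if p ∈ descSet σ then p else 0) =
      maj σ + (p + 1) + dstat σ (p + 1) := by
  set A := {i ∈ descSet σ | i < p}
  set F := {i ∈ descSet σ | p + 1 ≤ i}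
  have hA : Disjoint A {p + 1} := by
    simp only [A, Finset.disjoint_singleton_right, Finset.mem_filter]; omega
  have hF : Disjoint (A ∪ {p + 1}) (F.image (· + 1)) := by
    simp only [A, F, Finset.disjoint_left, Finset.mem_union, Finset.mem_filter,
      Finset.mem_singleton, Finset.mem_image]
    omega
  have hmaj_new : maj (σ.insertIdx p r) = ∑ i ∈ A, i + (p + 1) + (∑ i ∈ F, i + F.card) := by
    rw [maj, descSet_insertIdx_of_forall_lt hr hp, Finset.sum_union hF, Finset.sum_union hA,
      Finset.sum_image (by simp), Finset.sum_add_distrib, Finset.sum_singleton,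
      Finset.card_eq_sum_ones]
  have hmaj_old : maj σ = ∑ i ∈ A, i + (∑ i ∈ F, i + if p ∈ descSet σ then p else 0) := by
    rw [maj, ← Finset.sum_filter_add_sum_filter_not (descSet σ) (· < p),
      ← Finset.sum_filter_le_eq_add_ite]
    simp only [not_lt, A]
  rw [hmaj_new, hmaj_old, dstat]
  ring

theorem mi_succ_of_forall_lt (hr : ∀ x ∈ σ, x < r) {p : ℕ} (hp : p < σ.length) :
    mi σ (p + 1) r = p + 1 + dstat σ (p + 1) - if p ∈ descSet σ then (p : ℤ) else 0 := by
  have h := congrArg (Nat.cast : ℕ → ℤ) (maj_insertIdx_of_forall_lt hr hp)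
  rw [mi, Nat.add_sub_cancel]
  split_ifs at h ⊢ <;> push_cast at h <;> omega

theorem image_mi_Icc_of_forall_lt (hr : ∀ x ∈ σ, x < r) :
    ∀ k ≤ σ.length, (Finset.Icc 1 k).image (fun j => mi σ j r) =
      Finset.Icc ((dstat σ k : ℤ) + 1) ((dstat σ k : ℤ) + k)
  | 0, _ => by simp
  | k + 1, hk => by
    rw [← Finset.insert_Icc_right_eq_Icc_add_one (by omega), Finset.image_insert,
      image_mi_Icc_of_forall_lt hr k (by omega), mi_succ_of_forall_lt hr hk,
      dstat_eq_add_ite σ k]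
    ext x
    simp only [Finset.mem_insert, Finset.mem_Icc]
    split_ifs <;> push_cast <;> omega

end InsertMax

theorem mis_initial_segment_max_general (n : ℕ) (σ : List ℤ)
    (hlen : σ.length + 1 = n) (r : ℤ) (hr : ∀ x ∈ σ, x < r)
    (k : ℕ) (hk : k ≤ n - 1) :
    (Finset.Icc 1 k).image (fun j => mi σ j r) =
      Finset.Icc ((dstat σ k : ℤ) + 1) ((dstat σ k : ℤ) + k) :=
  image_mi_Icc_of_forall_lt hr k (by omega)

/-- If r is greater than every letter of σ, then for 1 ≤ k ≤ n-1 the set of the first k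
entries of MIS(σ,r) is the integer interval {dₖ(σ)+1, ..., dₖ(σ)+k}. -/
theorem mis_initial_segment_max (n : ℕ) (σ : List ℤ) (hnd : σ.Nodup)
    (hlen : σ.length + 1 = n) (r : ℤ) (hr : ∀ x ∈ σ, x < r)
    (k : ℕ) (hk1 : 1 ≤ k) (hk : k ≤ n - 1) :
    (Finset.Icc 1 k).image (fun j => mi σ j r) =
      Finset.Icc ((dstat σ k : ℤ) + 1) ((dstat σ k : ℤ) + k) :=
  mis_initial_segment_max_general n σ hlen r hr k hk
end
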